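/- The elements [T], as T ranges over straight tableaux of a fixed row-convex shape D with entries in an alphabet L, are linearly independent over Z: the matrix expressing them in the monomial basis of the polynomial ring is in echelon form with pivots ±1 when monomials are ordered by the diagonal term order and tableaux are ordered lexicographically by modified column word. -/

import Mathlib

open scoped BigOperators

/-- A cell `(row, column)` of a diagram. -/
abbrev Cell := ℕ × ℕ

/-- A shape is row-convex if its rows have no gaps. -/
def RowConvex (D : Finset Cell) : Prop :=
  ∀ r i j k : ℕ, (r, i) ∈ D → (r, k) ∈ D → i ≤ j → j ≤ k → (r, j) ∈ D

/-- Rows strictly increase left to right (negative-letter convention). -/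
def RowStandard (D : Finset Cell) (T : Cell → ℕ) : Prop :=
  ∀ r i j : ℕ, (r, i) ∈ D → (r, j) ∈ D → i < j → T (r, i) < T (r, j)

/-- A straight tableau (negative-letter case). -/
def Straight (D : Finset Cell) (T : Cell → ℕ) : Prop :=
  RowStandard D T ∧
    ∀ i j k : ℕ, (i, k) ∈ D → (j, k) ∈ D → i < j → T (j, k) < T (i, k) →
      1 ≤ k ∧ (i, k - 1) ∈ D ∧ T (j, k) < T (i, k - 1)

/-- Sorted list of column indices of the cells of `D` in row `r`. -/
def rowColsList (D : Finset Cell) (r : ℕ) : List ℕ :=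
  ((D.filter (fun c => c.1 = r)).val.map Prod.snd).sort (· ≤ ·)

/-- The bracket (determinant of the minor of the generic matrix `(x_{l,p})`)
corresponding to row `r` of the tableau `T`. -/
noncomputable def rowBracket (D : Finset Cell) (T : Cell → ℕ) (r : ℕ) :
    MvPolynomial Cell ℤ :=
  Matrix.det (Matrix.of fun s t : Fin (rowColsList D r).length =>
    MvPolynomial.X (T (r, (rowColsList D r).get s), (rowColsList D r).get t))

/-- `[T]`: the product over the rows of `D` of the row brackets. -/
noncomputable def bracket (D : Finset Cell) (T : Cell → ℕ) : MvPolynomial Cell ℤ :=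
  ∏ r ∈ D.image Prod.fst, rowBracket D T r

/-- Multiset of entries of `T` in column `k` of `D`. -/
def colEntries (D : Finset Cell) (T : Cell → ℕ) (k : ℕ) : Multiset ℕ :=
  (D.filter (fun c => c.2 = k)).val.map T

/-- The modified column word: entries of each column in weakly decreasing
order, columns read left to right. -/
def modColWord (D : Finset Cell) (T : Cell → ℕ) : List ℕ :=
  (List.range (D.sup Prod.snd + 1)).flatMap fun k =>
    ((colEntries D T k).sort (· ≤ ·)).reverse

/-- The column word: entries read bottom to top within each column, columns
left to right. -/
def colWord (D : Finset Cell) (T : Cell → ℕ) : List ℕ :=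
  (List.range (D.sup Prod.snd + 1)).flatMap fun k =>
    (List.range (D.sup Prod.fst + 1)).reverse.filterMap fun i =>
      if (i, k) ∈ D then some (T (i, k)) else none

/-- Strict lexicographic order on words. -/
def lexLt (u v : List ℕ) : Prop := List.Lex (· < ·) u v

/-- Weak lexicographic order on words. -/
def lexLe (u v : List ℕ) : Prop := u = v ∨ List.Lex (· < ·) u v

/-- `varGt v w`: the variable `x_v` is greater than `x_w` in the default
diagonal order: strictly earlier column, or same column and strictly larger
row index (letter). -/
def varGt (v w : Cell) : Prop := v.2 < w.2 ∨ (v.2 = w.2 ∧ w.1 < v.1)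

/-- The default diagonal term order on monomials: `monLt M N` iff the greatest
variable occurring to different powers in `M` and `N` divides `N` to a higher
power. -/
def monLt (M N : Cell →₀ ℕ) : Prop :=
  ∃ v : Cell, M v < N v ∧ ∀ w : Cell, varGt w v → M w = N w

/-- The diagonal monomial of a tableau: the product over the cells `(i, c)` of
`D` of the variables `x_{T(i,c), c}`. -/
noncomputable def diagMon (D : Finset Cell) (T : Cell → ℕ) : Cell →₀ ℕ :=
  ∑ c ∈ D, Finsupp.single (T c, c.2) 1

/-- `m` is the initial (smallest) monomial of `p` in the default diagonal term
order. -/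
def IsInitMon (p : MvPolynomial Cell ℤ) (m : Cell →₀ ℕ) : Prop :=
  m ∈ p.support ∧ ∀ m' ∈ p.support, m' = m ∨ monLt m m'

/-!
The bracket `[T]` is a product of minors of the generic matrix, one per row. For a row-standard
tableau each minor has increasing row and column indices, so its initial monomial is the diagonal
term, with coefficient `1`; the initial monomial of `[T]` is therefore the diagonal monomial of
`T`, with coefficient `1`. The exponents of the diagonal monomial in column `k` record the multiset
of entries of column `k` of `T`, and a straight tableau is determined by these multisets, column by
column from the left. Distinct initial monomials with unit coefficients give linear independence.
-/

open MvPolynomial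

section TermOrder

def varKey (v : Cell) : ℕ ×ₗ ℕᵒᵈ := toLex (v.2, OrderDual.toDual v.1)

lemma varKey_injective : Function.Injective varKey := by
  intro v w h
  simp only [varKey, toLex_inj, Prod.mk.injEq, OrderDual.toDual_inj] at h
  exact Prod.ext h.2 h.1

lemma varGt_iff_varKey_lt {v w : Cell} : varGt v w ↔ varKey v < varKey w := by
  simp [varGt, varKey, Prod.Lex.toLex_lt_toLex]

/-- Transports `monLt` to Mathlib's lexicographic order on finsupps (see `monLt_iff_monKey_lt`),
which is a linear order compatible with addition. -/
noncomputable def monKey (M : Cell →₀ ℕ) : Lex ((ℕ ×ₗ ℕᵒᵈ) →₀ ℕ) :=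
  toLex (M.mapDomain varKey)

lemma monKey_injective : Function.Injective monKey :=
  toLex.injective.comp (Finsupp.mapDomain_injective varKey_injective)

lemma monKey_add (M N : Cell →₀ ℕ) : monKey (M + N) = monKey M + monKey N := by
  simp [monKey, Finsupp.mapDomain_add]

lemma monKey_apply_varKey (M : Cell →₀ ℕ) (v : Cell) : ofLex (monKey M) (varKey v) = M v :=
  Finsupp.mapDomain_apply varKey_injective M v

lemma monKey_apply_of_notMem_range (M : Cell →₀ ℕ) {j : ℕ ×ₗ ℕᵒᵈ}
    (hj : j ∉ Set.range varKey) : ofLex (monKey M) j = 0 :=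
  Finsupp.mapDomain_of_notMem_range M j hj

lemma monLt_iff_monKey_lt {M N : Cell →₀ ℕ} : monLt M N ↔ monKey M < monKey N := by
  rw [Finsupp.Lex.lt_iff]
  constructor
  · rintro ⟨v, hlt, hagree⟩
    refine ⟨varKey v, fun j hj => ?_, by simpa only [monKey_apply_varKey] using hlt⟩
    by_cases hj' : j ∈ Set.range varKey
    · obtain ⟨w, rfl⟩ := hj'
      simpa only [monKey_apply_varKey] using hagree w (varGt_iff_varKey_lt.2 hj)
    · simp only [monKey_apply_of_notMem_range _ hj']
  · rintro ⟨j, hagree, hlt⟩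
    obtain ⟨v, rfl⟩ : j ∈ Set.range varKey := by
      by_contra hj
      simp only [monKey_apply_of_notMem_range _ hj, lt_self_iff_false] at hlt
    refine ⟨v, by simpa only [monKey_apply_varKey] using hlt, fun w hw => ?_⟩
    simpa only [monKey_apply_varKey] using hagree _ (varGt_iff_varKey_lt.1 hw)

end TermOrder

section InitialMonomials

variable {R : Type*}

def IsMonicInitMon [CommSemiring R] (p : MvPolynomial Cell R) (m : Cell →₀ ℕ) : Prop :=
  coeff m p = 1 ∧ ∀ u ∈ p.support, monKey m ≤ monKey u

lemma IsMonicInitMon.isInitMon {p : MvPolynomial Cell ℤ} {m : Cell →₀ ℕ}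
    (h : IsMonicInitMon p m) : IsInitMon p m := by
  refine ⟨mem_support_iff.2 (by simp [h.1]), fun u hu => ?_⟩
  rcases (h.2 u hu).eq_or_lt with heq | hlt
  · exact Or.inl (monKey_injective heq).symm
  · exact Or.inr (monLt_iff_monKey_lt.2 hlt)

variable [CommSemiring R]

lemma isMonicInitMon_one : IsMonicInitMon (1 : MvPolynomial Cell R) 0 :=
  ⟨coeff_zero_one, fun u _ => by simp [monKey, zero_le]⟩

lemma IsMonicInitMon.mul {p q : MvPolynomial Cell R} {m n : Cell →₀ ℕ}
    (hp : IsMonicInitMon p m) (hq : IsMonicInitMon q n) : IsMonicInitMon (p * q) (m + n) := by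
  refine ⟨?_, fun u hu => ?_⟩
  · rw [coeff_mul, Finset.sum_eq_single (m, n) _ (by simp)]
    · rw [hp.1, hq.1, one_mul]
    · rintro ⟨x, y⟩ hxy hne
      simp only [Finset.HasAntidiagonal.mem_antidiagonal] at hxy
      by_contra hc
      have hx := hp.2 x (mem_support_iff.2 (left_ne_zero_of_mul hc))
      have hy := hq.2 y (mem_support_iff.2 (right_ne_zero_of_mul hc))
      have hsum : monKey x + monKey y = monKey m + monKey n := by
        rw [← monKey_add, ← monKey_add, hxy]
      obtain rfl : x = m := monKey_injective (le_antisymm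
        (le_of_add_le_add_right (hsum.le.trans (add_le_add le_rfl hy))) hx)
      exact hne (by rw [add_left_cancel hxy])
  · obtain ⟨x, hx, y, hy, rfl⟩ := Finset.mem_add.1 (support_mul p q hu)
    rw [monKey_add, monKey_add]
    exact add_le_add (hp.2 x hx) (hq.2 y hy)

lemma IsMonicInitMon.prod {ι : Type*} (s : Finset ι) {p : ι → MvPolynomial Cell R}
    {m : ι → Cell →₀ ℕ} (h : ∀ i ∈ s, IsMonicInitMon (p i) (m i)) :
    IsMonicInitMon (∏ i ∈ s, p i) (∑ i ∈ s, m i) := by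
  induction s using Finset.cons_induction with
  | empty => exact isMonicInitMon_one
  | cons i s hi ih =>
    rw [Finset.prod_cons, Finset.sum_cons]
    exact (h i (Finset.mem_cons_self i s)).mul
      (ih fun j hj => h j (Finset.mem_cons_of_mem hj))

end InitialMonomials

/-- In a vanishing combination, the smallest initial monomial of a member with nonzero
coefficient occurs in no other member. -/
lemma linearIndependent_of_isMonicInitMon {ι R : Type*} [CommRing R]
    {p : ι → MvPolynomial Cell R} {m : ι → Cell →₀ ℕ} (hm : Function.Injective m)
    (hp : ∀ i, IsMonicInitMon (p i) (m i)) : LinearIndependent R p := by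
  rw [linearIndependent_iff]
  intro l hl
  by_contra hl0
  obtain ⟨i₀, hi₀, hmin⟩ :=
    l.support.exists_min_image (fun i => monKey (m i)) (Finsupp.support_nonempty_iff.2 hl0)
  have hcoeff : coeff (m i₀) (Finsupp.linearCombination R p l) = l i₀ := by
    rw [Finsupp.linearCombination_apply, Finsupp.sum, coeff_sum,
      Finset.sum_eq_single i₀ _ (fun h => absurd hi₀ h), coeff_smul, (hp i₀).1, smul_eq_mul,
      mul_one]
    intro i hi hne
    rw [coeff_smul, notMem_support_iff.1, smul_zero]
    intro hmem
    exact hne (hm (monKey_injective (le_antisymm ((hp i).2 _ hmem) (hmin i hi))))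
  rw [hl, coeff_zero] at hcoeff
  exact Finsupp.mem_support_iff.1 hi₀ hcoeff.symm

section GenericDeterminant

variable {n : ℕ} (a b : Fin n → ℕ)

/-- The exponent of the term `∏ i, x_{a (σ i), b i}` of the minor with rows `a`, columns `b`. -/
noncomputable def permMon (σ : Equiv.Perm (Fin n)) : Cell →₀ ℕ :=
  ∑ i, Finsupp.single (a (σ i), b i) 1

variable {a b}

lemma permMon_apply_mk_of_injective (hb : Function.Injective b) (σ : Equiv.Perm (Fin n))
    (x : ℕ) (i : Fin n) : permMon a b σ (x, b i) = if a (σ i) = x then 1 else 0 := by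
  rw [permMon, Finsupp.finsetSum_apply, Finset.sum_eq_single i]
  · simp [Finsupp.single_apply]
  · intro j _ hji
    simp [hb.ne hji]
  · simp

lemma permMon_apply_mk_of_notMem_range (σ : Equiv.Perm (Fin n)) (x : ℕ) {y : ℕ}
    (hy : y ∉ Set.range b) : permMon a b σ (x, y) = 0 := by
  rw [permMon, Finsupp.finsetSum_apply]
  refine Finset.sum_eq_zero fun i _ => Finsupp.single_eq_of_ne ?_
  rintro ⟨-, rfl⟩
  exact hy ⟨i, rfl⟩

/-- A permutation `σ ≠ 1` moves its least non-fixed point `j` upwards, and `x_{a (σ j), b j}` is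
then the largest variable on which the two terms differ. -/
lemma monLt_permMon_one (ha : StrictMono a) (hb : StrictMono b) {σ : Equiv.Perm (Fin n)}
    (hσ : σ ≠ 1) : monLt (permMon a b 1) (permMon a b σ) := by
  obtain ⟨j, hjσ, hjmin⟩ := wellFounded_lt.has_min {i | σ i ≠ i} <| by
    by_contra h
    exact hσ (Equiv.ext fun i => by_contra fun hi => h ⟨i, hi⟩)
  have hfix : ∀ i < j, σ i = i := fun i hi => by_contra fun h => hjmin i h hi
  have hjlt : j < σ j := by
    refine lt_of_le_of_ne (not_lt.1 fun h => hjσ ?_) (Ne.symm hjσ)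
    exact σ.injective (hfix _ h)
  have hperm := permMon_apply_mk_of_injective (a := a) hb.injective
  refine ⟨(a (σ j), b j), ?_, ?_⟩
  · simp [hperm, ha.injective.ne hjσ.symm]
  · rintro ⟨x, y⟩ hw
    by_cases hy : y ∈ Set.range b
    · obtain ⟨i, rfl⟩ := hy
      rcases hw with hlt | ⟨heq, hgt⟩
      · rw [hperm, hperm, Equiv.Perm.one_apply, hfix i (hb.lt_iff_lt.1 hlt)]
      · obtain rfl : i = j := hb.injective heq
        have hx : a i < x := (ha hjlt).trans hgt
        simp [hperm, hx.ne, hgt.ne]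
    · simp [permMon_apply_mk_of_notMem_range _ _ hy]

variable (a b)

lemma det_X_eq_sum_permMon {R : Type*} [CommRing R] :
    (Matrix.of fun s t : Fin n => (X (a s, b t) : MvPolynomial Cell R)).det =
      ∑ σ : Equiv.Perm (Fin n),
        (Equiv.Perm.sign σ : ℤ) • monomial (permMon a b σ) (1 : R) := by
  refine (Matrix.det_apply _).trans (Finset.sum_congr rfl fun σ _ => ?_)
  simp [Units.smul_def, permMon, monomial_sum_one, X]

variable {a b}

lemma isMonicInitMon_det_X {R : Type*} [CommRing R] (ha : StrictMono a) (hb : StrictMono b) :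
    IsMonicInitMon (Matrix.of fun s t : Fin n => (X (a s, b t) : MvPolynomial Cell R)).det
      (permMon a b 1) := by
  have hlt : ∀ σ ≠ 1, monKey (permMon a b 1) < monKey (permMon a b σ) :=
    fun σ hσ => monLt_iff_monKey_lt.1 (monLt_permMon_one ha hb hσ)
  rw [det_X_eq_sum_permMon]
  refine ⟨?_, fun u hu => ?_⟩
  · rw [coeff_sum, Finset.sum_eq_single 1 (fun σ _ hσ => ?_) (by simp)]
    · simp
    · rw [coeff_smul, coeff_monomial, if_neg (fun h => (hlt σ hσ).ne (by rw [h])), smul_zero]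
  · obtain ⟨σ, -, hσ⟩ := Finset.mem_biUnion.1 (support_sum hu)
    rw [Finset.mem_singleton.1 (support_monomial_subset (support_smul hσ))]
    rcases eq_or_ne σ 1 with rfl | hσ1
    · exact le_rfl
    · exact (hlt σ hσ1).le

end GenericDeterminant

section Brackets

variable {D : Finset Cell} {T : Cell → ℕ}

lemma injOn_snd_filter_fst_eq (D : Finset Cell) (r : ℕ) :
    Set.InjOn Prod.snd (D.filter fun c => c.1 = r : Set Cell) := by
  intro c hc c' hc' h
  simp only [Finset.coe_filter, Set.mem_ofPred_eq] at hc hc'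
  exact Prod.ext (hc.2.trans hc'.2.symm) h

lemma rowColsList_eq_sort (D : Finset Cell) (r : ℕ) :
    rowColsList D r = ((D.filter fun c => c.1 = r).image Prod.snd).sort := by
  rw [rowColsList, ← Finset.sort_val, Finset.image_val_of_injOn (injOn_snd_filter_fst_eq D r)]

lemma mem_rowColsList {r x : ℕ} : x ∈ rowColsList D r ↔ (r, x) ∈ D := by
  simp [rowColsList_eq_sort]

lemma rowColsList_get_strictMono (D : Finset Cell) (r : ℕ) :
    StrictMono (rowColsList D r).get := by
  have h := Finset.sortedLT_sort ((D.filter fun c => c.1 = r).image Prod.snd)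
  rw [← rowColsList_eq_sort] at h
  exact h.strictMono_get

lemma permMon_one_rowColsList (D : Finset Cell) (T : Cell → ℕ) (r : ℕ) :
    permMon (fun s => T (r, (rowColsList D r).get s)) (rowColsList D r).get 1 =
      ∑ c ∈ D with c.1 = r, Finsupp.single (T c, c.2) 1 := by
  simp only [permMon, Equiv.Perm.one_apply, List.get_eq_getElem]
  rw [Fin.sum_univ_fun_getElem (rowColsList D r) fun x => Finsupp.single (T (r, x), x) 1,
    rowColsList_eq_sort, ← Multiset.sum_coe, ← Multiset.map_coe, Finset.sort_eq,
    ← Finset.sum_eq_multiset_sum, Finset.sum_image (injOn_snd_filter_fst_eq D r)]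
  refine Finset.sum_congr rfl fun c hc => ?_
  obtain ⟨-, rfl⟩ := Finset.mem_filter.1 hc
  rfl

lemma isMonicInitMon_rowBracket (hT : RowStandard D T) (r : ℕ) :
    IsMonicInitMon (rowBracket D T r) (∑ c ∈ D with c.1 = r, Finsupp.single (T c, c.2) 1) := by
  have hcols := rowColsList_get_strictMono D r
  rw [← permMon_one_rowColsList]
  refine isMonicInitMon_det_X (fun s t hst => ?_) hcols
  exact hT r _ _ (mem_rowColsList.1 (List.get_mem _ _)) (mem_rowColsList.1 (List.get_mem _ _))
    (hcols hst)

lemma diagMon_eq_sum_rows (D : Finset Cell) (T : Cell → ℕ) :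
    diagMon D T =
      ∑ r ∈ D.image Prod.fst, ∑ c ∈ D with c.1 = r, Finsupp.single (T c, c.2) 1 :=
  (Finset.sum_fiberwise_of_maps_to (fun _ hc => Finset.mem_image_of_mem _ hc) _).symm

lemma isMonicInitMon_bracket (hT : RowStandard D T) :
    IsMonicInitMon (bracket D T) (diagMon D T) := by
  rw [bracket, diagMon_eq_sum_rows]
  exact IsMonicInitMon.prod _ fun r _ => isMonicInitMon_rowBracket hT r

end Brackets

section Straight

variable {D : Finset Cell} {T T' : Cell → ℕ}

lemma count_colEntries (D : Finset Cell) (T : Cell → ℕ) (k x : ℕ) :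
    (colEntries D T k).count x = (D.filter fun c => c.2 = k ∧ T c = x).card := by
  rw [colEntries, Multiset.count_map, ← Finset.filter_val, Finset.filter_filter, Finset.card_val]
  simp only [eq_comm]

lemma diagMon_apply_mk (D : Finset Cell) (T : Cell → ℕ) (x k : ℕ) :
    diagMon D T (x, k) = (colEntries D T k).count x := by
  simp [diagMon, count_colEntries, Finsupp.finsetSum_apply, Finsupp.single_apply, and_comm]

lemma colEntries_eq_of_diagMon_eq (h : diagMon D T = diagMon D T') (k : ℕ) :
    colEntries D T k = colEntries D T' k :=
  Multiset.ext.2 fun x => by rw [← diagMon_apply_mk, ← diagMon_apply_mk, h]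

/-- Otherwise `T'` carries the entry `T (i₀, k)` at another cell `(j₀, k)`, where `T` is larger.
Whichever of the rows `i₀`, `j₀` is higher, one of the tableaux has an inversion there, and its
straightness condition, read in column `k - 1` where the tableaux agree, contradicts the row order
of the other tableau. -/
lemma Straight.not_lt_of_min_disagreement (hT : Straight D T) (hT' : Straight D T')
    {k i₀ : ℕ} (hcol : colEntries D T k = colEntries D T' k)
    (hprev : ∀ j < k, ∀ i, (i, j) ∈ D → T (i, j) = T' (i, j)) (h₀ : (i₀, k) ∈ D)
    (hmin : ∀ c ∈ D, c.2 = k → T c ≠ T' c → T (i₀, k) ≤ T c) :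
    ¬ T (i₀, k) < T' (i₀, k) := by
  intro hlt
  obtain ⟨j₀, hj₀, hTj, hT'j⟩ :
      ∃ j₀, (j₀, k) ∈ D ∧ T (i₀, k) < T (j₀, k) ∧ T' (j₀, k) = T (i₀, k) := by
    have hcard := count_colEntries D T' k (T (i₀, k))
    rw [← hcol, count_colEntries] at hcard
    obtain ⟨c, hc, hcS⟩ := Finset.exists_mem_notMem_of_card_lt_card
      (s := (D.filter fun c => c.2 = k ∧ T c = T (i₀, k)).erase (i₀, k))
      (hcard ▸ Finset.card_erase_lt_of_mem (by simp [h₀]))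
    simp only [Finset.mem_filter, Finset.mem_erase] at hc hcS
    obtain ⟨hcD, rfl, hcT'⟩ := hc
    have hTc : T c ≠ T' c := fun h => by
      refine hcS ⟨fun hc₀ => ?_, hcD, rfl, h.trans hcT'⟩
      rw [hc₀] at hcT'
      exact hlt.ne' hcT'
    exact ⟨c.1, hcD, lt_of_le_of_ne (hmin c hcD rfl hTc) (hcT' ▸ hTc.symm), hcT'⟩
  rcases lt_or_gt_of_ne (show i₀ ≠ j₀ by rintro rfl; omega) with hij | hji
  · obtain ⟨hk, hmem, hval⟩ := hT'.2 i₀ j₀ k h₀ hj₀ hij (hT'j ▸ hlt)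
    have := hT.1 i₀ (k - 1) k hmem h₀ (by omega)
    have := hprev (k - 1) (by omega) i₀ hmem
    omega
  · obtain ⟨hk, hmem, hval⟩ := hT.2 j₀ i₀ k hj₀ h₀ hji hTj
    have := hT'.1 j₀ (k - 1) k hmem hj₀ (by omega)
    have := hprev (k - 1) (by omega) j₀ hmem
    omega

lemma Straight.eqOn_of_colEntries_eq (hT : Straight D T) (hT' : Straight D T')
    (hcol : ∀ k, colEntries D T k = colEntries D T' k) : Set.EqOn T T' D := by
  suffices h : ∀ k i, (i, k) ∈ D → T (i, k) = T' (i, k) from fun c hc => h c.2 c.1 hc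
  intro k
  induction k using Nat.strong_induction_on with
  | _ k ih =>
    by_contra! hne
    obtain ⟨i, hi, hTi⟩ := hne
    obtain ⟨⟨i₀, k₀⟩, hc₀, hmin⟩ :=
      (D.filter fun c => c.2 = k ∧ T c ≠ T' c).exists_min_image
        (fun c => min (T c) (T' c)) ⟨(i, k), by simp [hi, hTi]⟩
    simp only [Finset.mem_filter] at hc₀ hmin
    obtain ⟨h₀, rfl, hne₀⟩ := hc₀
    rcases lt_or_gt_of_ne hne₀ with hlt | hgt
    · refine hT.not_lt_of_min_disagreement hT' (hcol k₀) ih h₀ (fun c hc hck hne => ?_) hlt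
      have := hmin c ⟨hc, hck, hne⟩
      omega
    · refine hT'.not_lt_of_min_disagreement hT (hcol k₀).symm
        (fun j hj i hij => (ih j hj i hij).symm) h₀ (fun c hc hck hne => ?_) hgt
      have := hmin c ⟨hc, hck, Ne.symm hne⟩
      omega

lemma diagMon_injOn_straight :
    Set.InjOn (diagMon D) {T | Straight D T ∧ ∀ c ∉ D, T c = 0} := by
  intro T hT T' hT' h
  funext c
  by_cases hc : c ∈ D
  · exact Straight.eqOn_of_colEntries_eq hT.1 hT'.1 (colEntries_eq_of_diagMon_eq h) hc
  · rw [hT.2 c hc, hT'.2 c hc]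

end Straight

theorem straight_brackets_linearIndependent_general
    (D : Finset Cell) :
    (∀ T : {T : Cell → ℕ // Straight D T ∧ ∀ c ∉ D, T c = 0},
      IsInitMon (bracket D T.1) (diagMon D T.1)) ∧
    (∀ T T' : {T : Cell → ℕ // Straight D T ∧ ∀ c ∉ D, T c = 0},
      T ≠ T' → diagMon D T.1 ≠ diagMon D T'.1) ∧
    (∀ T : {T : Cell → ℕ // Straight D T ∧ ∀ c ∉ D, T c = 0},
      MvPolynomial.coeff (diagMon D T.1) (bracket D T.1) = 1 ∨
        MvPolynomial.coeff (diagMon D T.1) (bracket D T.1) = -1) ∧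
    LinearIndependent ℤ
      (fun T : {T : Cell → ℕ // Straight D T ∧ ∀ c ∉ D, T c = 0} =>
        bracket D T.1) := by
  have hinit : ∀ T : {T : Cell → ℕ // Straight D T ∧ ∀ c ∉ D, T c = 0},
      IsMonicInitMon (bracket D T.1) (diagMon D T.1) :=
    fun T => isMonicInitMon_bracket T.2.1.1
  have hinj : Function.Injective
      fun T : {T : Cell → ℕ // Straight D T ∧ ∀ c ∉ D, T c = 0} => diagMon D T.1 :=
    fun T T' h => Subtype.ext (diagMon_injOn_straight T.2 T'.2 h)
  exact ⟨fun T => (hinit T).isInitMon, fun _ _ => hinj.ne, fun T => Or.inl (hinit T).1,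
    linearIndependent_of_isMonicInitMon hinj hinit⟩

/-- The brackets `[T]`, for `T` ranging over the straight tableaux of a fixed
row-convex shape `D` (normalized to vanish off `D`), are linearly independent
over `ℤ`: their initial monomials in the default diagonal term order are
pairwise distinct, each occurs with coefficient `±1` (echelon form with `±1`
pivots), and the family is `ℤ`-linearly independent. -/
theorem straight_brackets_linearIndependent
    (D : Finset Cell) (hD : RowConvex D) :
    (∀ T : {T : Cell → ℕ // Straight D T ∧ ∀ c ∉ D, T c = 0},
      IsInitMon (bracket D T.1) (diagMon D T.1)) ∧
    (∀ T T' : {T : Cell → ℕ // Straight D T ∧ ∀ c ∉ D, T c = 0},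
      T ≠ T' → diagMon D T.1 ≠ diagMon D T'.1) ∧
    (∀ T : {T : Cell → ℕ // Straight D T ∧ ∀ c ∉ D, T c = 0},
      MvPolynomial.coeff (diagMon D T.1) (bracket D T.1) = 1 ∨
        MvPolynomial.coeff (diagMon D T.1) (bracket D T.1) = -1) ∧
    LinearIndependent ℤ
      (fun T : {T : Cell → ℕ // Straight D T ∧ ∀ c ∉ D, T c = 0} =>
        bracket D T.1) :=
  straight_brackets_linearIndependent_general D
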